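/- arXiv:0812.4920 — 6 statements merged into one kernel-verified Lean document; each statement's English description precedes it below -/
import Mathlib

section
/- Let (H, L, t) be a list coloring problem, let G be a subgraph of H, let A = ⋃_{p ∈ V(G)} L_p and suppose |A| = k ≤ t. Suppose there exists a map c : V(G) → {1,…,k} such that for every solution τ of the list coloring problem (G, L|_{V(G)}, t) and all p, q ∈ V(G), τ(p) = τ(q) if and only if c(p) = c(q). Let v ∈ V(H) ∖ V(G) be a vertex such that for every j ∈ {1,…,k} some neighbor of v in H belongs to c^{-1}(j). Then every solution σ of (H, L, t) satisfies σ(v) ∉ A; consequently, the list coloring problems (H, L, t) and (H, L', t), where L'_v = L_v ∖ A and L'_w = L_w for all w ≠ v, have exactly the same solutions. -/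
/-!
Any solution `σ` of `(H, L, t)` restricts to a solution on `G`, so `σ` is constant exactly on
the classes of `c`. Choosing for each of the `k` classes a neighbour of `v` in it, these
neighbours therefore carry `k` distinct colors, all lying in `A`; as `|A| = k` they exhaust `A`,
and properness at `v` leaves no color of `A` for `v`.
-/

open Finset

theorem SimpleGraph.apply_notMem_of_neighbors_injective {V β ι : Type*} [Fintype ι]
    {H : SimpleGraph V} {σ : V → β} (hσ : ∀ a b, H.Adj a b → σ a ≠ σ b)
    {A : Finset β} {v : V} (p : ι → V) (hadj : ∀ i, H.Adj v (p i))
    (hinj : Function.Injective (σ ∘ p)) (hmem : ∀ i, σ (p i) ∈ A)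
    (hcard : #A ≤ Fintype.card ι) : σ v ∉ A := by
  intro hv
  obtain ⟨i, -, hi⟩ := surj_on_of_inj_on_of_card_le (s := univ) (fun i _ => σ (p i))
    (fun i _ => hmem i) (fun i j _ _ h => hinj h) (by simpa using hcard) (σ v) hv
  exact hσ v (p i) (hadj i) hi

theorem forall_mem_ite_sdiff_iff {V β : Type*} [DecidableEq V] [DecidableEq β]
    {P : Prop} {σ : V → β} {L : V → Finset β} {A : Finset β} {v : V}
    (hforced : P → (∀ w, σ w ∈ L w) → σ v ∉ A) :
    (P ∧ ∀ w, σ w ∈ L w) ↔ (P ∧ ∀ w, σ w ∈ if w = v then L v \ A else L w) := by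
  refine ⟨fun ⟨hP, hL⟩ => ⟨hP, fun w => ?_⟩, fun ⟨hP, hL⟩ => ⟨hP, fun w => ?_⟩⟩
  · split_ifs with hw
    · subst hw
      exact mem_sdiff.2 ⟨hL w, hforced hP hL⟩
    · exact hL w
  · have hw := hL w
    split_ifs at hw with hwv
    · subst hwv
      exact (mem_sdiff.1 hw).1
    · exact hw

theorem stmt1_general {V : Type*} [DecidableEq V]
    (H G : SimpleGraph V) (t k : ℕ) (L : V → Finset (Fin t))
    (S : Finset V) (hGH : G ≤ H)
    (hA : (S.biUnion L).card = k)
    (c : V → Fin k)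
    (hc : ∀ τ : V → Fin t,
      (∀ p q, G.Adj p q → τ p ≠ τ q) → (∀ p ∈ S, τ p ∈ L p) →
      ∀ p ∈ S, ∀ q ∈ S, (τ p = τ q ↔ c p = c q))
    (v : V)
    (hnb : ∀ j : Fin k, ∃ p ∈ S, H.Adj v p ∧ c p = j) :
    (∀ σ : V → Fin t,
        (∀ a b, H.Adj a b → σ a ≠ σ b) → (∀ w, σ w ∈ L w) →
        σ v ∉ S.biUnion L) ∧
    (∀ σ : V → Fin t,
        ((∀ a b, H.Adj a b → σ a ≠ σ b) ∧ ∀ w, σ w ∈ L w) ↔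
        ((∀ a b, H.Adj a b → σ a ≠ σ b) ∧
          ∀ w, σ w ∈ (if w = v then L v \ S.biUnion L else L w))) := by
  have forced : ∀ σ : V → Fin t, (∀ a b, H.Adj a b → σ a ≠ σ b) → (∀ w, σ w ∈ L w) →
      σ v ∉ S.biUnion L := by
    intro σ hσ hL
    choose p hpS hadj hcp using hnb
    have hclasses := hc σ (fun a b h => hσ a b (hGH h)) (fun q _ => hL q)
    have hinj : Function.Injective (σ ∘ p) := fun i j hij => by
      simpa only [hcp] using (hclasses _ (hpS i) _ (hpS j)).1 hij
    exact H.apply_notMem_of_neighbors_injective hσ p hadj hinj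
      (fun j => mem_biUnion.2 ⟨p j, hpS j, hL (p j)⟩) (by simp [hA])
  exact ⟨forced, fun σ => forall_mem_ite_sdiff_iff (forced σ)⟩

/-- Soundness of *type 1 forcing*.  `H` is a graph with lists `L`, `G ≤ H` is a
subgraph with vertex set `S`, `A = ⋃_{p ∈ S} L p` has `k ≤ t` elements, and the list
coloring problem on `G` has a unique solution up to permutation of colors, its color
classes being described by `c : V → Fin k`.  If `v ∉ S` has, for every class `j`, a
neighbour (in `H`) lying in class `j`, then every solution `σ` of `(H, L, t)` has
`σ v ∉ A`, and removing `A` from the list of `v` does not change the solution set. -/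
theorem stmt1 {V : Type*} [Fintype V] [DecidableEq V]
    (H G : SimpleGraph V) (t k : ℕ) (L : V → Finset (Fin t))
    (S : Finset V) (hGH : G ≤ H)
    (hGS : ∀ a b, G.Adj a b → a ∈ S ∧ b ∈ S)
    (hA : (S.biUnion L).card = k) (hkt : k ≤ t)
    (c : V → Fin k)
    (hc : ∀ τ : V → Fin t,
      (∀ p q, G.Adj p q → τ p ≠ τ q) → (∀ p ∈ S, τ p ∈ L p) →
      ∀ p ∈ S, ∀ q ∈ S, (τ p = τ q ↔ c p = c q))
    (v : V) (hv : v ∉ S)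
    (hnb : ∀ j : Fin k, ∃ p ∈ S, H.Adj v p ∧ c p = j) :
    (∀ σ : V → Fin t,
        (∀ a b, H.Adj a b → σ a ≠ σ b) → (∀ w, σ w ∈ L w) →
        σ v ∉ S.biUnion L) ∧
    (∀ σ : V → Fin t,
        ((∀ a b, H.Adj a b → σ a ≠ σ b) ∧ ∀ w, σ w ∈ L w) ↔
        ((∀ a b, H.Adj a b → σ a ≠ σ b) ∧
          ∀ w, σ w ∈ (if w = v then L v \ S.biUnion L else L w))) :=
  stmt1_general H G t k L S hGH hA c hc v hnb
end

section
/- Let (M, L, l) be a list coloring problem, let H be an induced subgraph of M with chromatic number t, and suppose the union ⋃_{w ∈ V(H)} L_w has at most t elements. Let V* ⊆ V(H) be a set such that in every proper coloring of H using exactly t colors, V* is one of the color classes. Then every solution σ of (M, L, l) is constant on V*, its common value on V* belongs to ⋂_{w ∈ V*} L_w, and the list coloring problems (M, L, l) and (M, L', l), where L'_w = ⋂_{p ∈ V*} L_p for w ∈ V* and L'_w = L_w otherwise, have exactly the same solutions. -/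
/-!
A solution `σ` colours the induced subgraph `H` on `S` with the colours `σ(S)`, all taken from
the union of the lists, so `t = χ(H) ≤ |σ(S)| ≤ t`. Relabelling these `t` colours by `Fin t`
therefore gives a proper colouring of `H` using exactly `t` colours, of which `Vs` is a colour
class; hence `σ` is constant on `Vs`, and its value there lies in every list `L w` with `w ∈ Vs`.
-/

open Finset

namespace SimpleGraph

variable {V α : Type*} [DecidableEq α]

theorem chromaticNumber_induce_le_card_image {G : SimpleGraph V} {S : Finset V} (f : V → α)
    (hf : ∀ a ∈ S, ∀ b ∈ S, G.Adj a b → f a ≠ f b) :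
    (G.induce (S : Set V)).chromaticNumber ≤ (S.image f).card := by
  let C : (G.induce (S : Set V)).Coloring (S.image f) :=
    Coloring.mk (fun v => ⟨f v, mem_image_of_mem f v.2⟩)
      fun hab hEq => hf _ (by simp) _ (by simp) hab (congrArg Subtype.val hEq)
  simpa using C.colorable.chromaticNumber_le

end SimpleGraph

theorem Finset.exists_fin_relabel_of_card_image_eq {V α : Type*} [DecidableEq α] {f : V → α}
    {S : Finset V} {t : ℕ} (hcard : (S.image f).card = t) (hS : S.Nonempty) :
    ∃ c : V → Fin t, (∀ a ∈ S, ∀ b ∈ S, (c a = c b ↔ f a = f b)) ∧ ∀ j, ∃ w ∈ S, c w = j := by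
  obtain ⟨w₀, hw₀⟩ := hS
  let e := (S.image f).equivFinOfCardEq hcard
  let c : V → Fin t := fun u =>
    if h : f u ∈ S.image f then e ⟨f u, h⟩ else e ⟨f w₀, mem_image_of_mem f hw₀⟩
  have hc : ∀ u (hu : u ∈ S), c u = e ⟨f u, mem_image_of_mem f hu⟩ := fun u hu =>
    dif_pos (mem_image_of_mem f hu)
  refine ⟨c, fun a ha b hb => ?_, fun j => ?_⟩
  · rw [hc a ha, hc b hb, e.apply_eq_iff_eq, Subtype.mk.injEq]
  · obtain ⟨u, hu, hfu⟩ := mem_image.mp (e.symm j).2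
    refine ⟨u, hu, ?_⟩
    rw [hc u hu, ← e.eq_symm_apply]
    exact Subtype.ext hfu

section ListColoring

variable {V : Type*} {l : ℕ} {M : SimpleGraph V} {L : V → Finset (Fin l)}
  {σ : V → Fin l}

theorem card_image_eq_of_chromaticNumber_eq {S : Finset V} {t : ℕ}
    (hchi : (M.induce (S : Set V)).chromaticNumber = t) (hA : (S.biUnion L).card ≤ t)
    (hσ : ∀ a b, M.Adj a b → σ a ≠ σ b) (hL : ∀ w, σ w ∈ L w) :
    (S.image σ).card = t := by
  have himage : S.image σ ⊆ S.biUnion L := by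
    rintro _ hx
    obtain ⟨a, ha, rfl⟩ := mem_image.mp hx
    exact mem_biUnion.mpr ⟨a, ha, hL a⟩
  have hlow : (t : ℕ∞) ≤ (S.image σ).card :=
    hchi ▸ M.chromaticNumber_induce_le_card_image σ fun a _ b _ hab => hσ a b hab
  exact le_antisymm ((card_le_card himage).trans hA) (by exact_mod_cast hlow)

theorem apply_eq_apply_of_forall_colorClass {S Vs : Finset V} {t : ℕ}
    (hchi : (M.induce (S : Set V)).chromaticNumber = t) (hA : (S.biUnion L).card ≤ t)
    (hVs : Vs ⊆ S)
    (hclass : ∀ c : V → Fin t,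
      (∀ a ∈ S, ∀ b ∈ S, M.Adj a b → c a ≠ c b) →
      (∀ j : Fin t, ∃ w ∈ S, c w = j) →
      ∃ j : Fin t, ∀ w ∈ S, (w ∈ Vs ↔ c w = j))
    (hσ : ∀ a b, M.Adj a b → σ a ≠ σ b) (hL : ∀ w, σ w ∈ L w) :
    ∀ w ∈ Vs, ∀ w' ∈ Vs, σ w = σ w' := by
  intro w hw w' hw'
  obtain ⟨c, hcσ, hsurj⟩ := exists_fin_relabel_of_card_image_eq
    (card_image_eq_of_chromaticNumber_eq hchi hA hσ hL) ⟨w, hVs hw⟩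
  have hproper : ∀ a ∈ S, ∀ b ∈ S, M.Adj a b → c a ≠ c b := fun a ha b hb hab hEq =>
    hσ a b hab ((hcσ a ha b hb).mp hEq)
  obtain ⟨j, hj⟩ := hclass c hproper hsurj
  exact (hcσ w (hVs hw) w' (hVs hw')).mp
    (((hj w (hVs hw)).mp hw).trans ((hj w' (hVs hw')).mp hw').symm)

theorem mem_inf_of_forall_apply_eq {Vs : Finset V} (hconst : ∀ w ∈ Vs, ∀ w' ∈ Vs, σ w = σ w')
    (hL : ∀ w, σ w ∈ L w) {w : V} (hw : w ∈ Vs) : σ w ∈ Vs.inf L :=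
  mem_inf.mpr fun w' hw' => hconst w hw w' hw' ▸ hL w'

theorem ite_inf_subset [DecidableEq V] (Vs : Finset V) (w : V) :
    (if w ∈ Vs then Vs.inf L else L w) ⊆ L w := by
  split_ifs with hw
  exacts [inf_le hw, subset_rfl]

theorem mem_ite_inf_of_forall_apply_eq [DecidableEq V] {Vs : Finset V}
    (hconst : ∀ w ∈ Vs, ∀ w' ∈ Vs, σ w = σ w')
    (hL : ∀ w, σ w ∈ L w) (w : V) : σ w ∈ (if w ∈ Vs then Vs.inf L else L w) := by
  split_ifs with hw
  exacts [mem_inf_of_forall_apply_eq hconst hL hw, hL w]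

end ListColoring

theorem stmt2_general {V : Type*} [DecidableEq V]
    (M : SimpleGraph V) (l t : ℕ) (L : V → Finset (Fin l))
    (S : Finset V)
    (hchi : (M.induce (↑S : Set V)).chromaticNumber = (t : ℕ∞))
    (hA : (S.biUnion L).card ≤ t)
    (Vs : Finset V) (hVs : Vs ⊆ S)
    (hclass : ∀ c : V → Fin t,
      (∀ a ∈ S, ∀ b ∈ S, M.Adj a b → c a ≠ c b) →
      (∀ j : Fin t, ∃ w ∈ S, c w = j) →
      ∃ j : Fin t, ∀ w ∈ S, (w ∈ Vs ↔ c w = j)) :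
    (∀ σ : V → Fin l,
        (∀ a b, M.Adj a b → σ a ≠ σ b) → (∀ w, σ w ∈ L w) →
        (∀ w ∈ Vs, ∀ w' ∈ Vs, σ w = σ w') ∧ (∀ w ∈ Vs, σ w ∈ Vs.inf L)) ∧
    (∀ σ : V → Fin l,
        ((∀ a b, M.Adj a b → σ a ≠ σ b) ∧ ∀ w, σ w ∈ L w) ↔
        ((∀ a b, M.Adj a b → σ a ≠ σ b) ∧
          ∀ w, σ w ∈ (if w ∈ Vs then Vs.inf L else L w))) := by
  have hconst : ∀ σ : V → Fin l, (∀ a b, M.Adj a b → σ a ≠ σ b) → (∀ w, σ w ∈ L w) →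
      ∀ w ∈ Vs, ∀ w' ∈ Vs, σ w = σ w' := fun σ hσ hL =>
    apply_eq_apply_of_forall_colorClass hchi hA hVs hclass hσ hL
  refine ⟨fun σ hσ hL =>
      ⟨hconst σ hσ hL, fun w hw => mem_inf_of_forall_apply_eq (hconst σ hσ hL) hL hw⟩,
    fun σ => ⟨fun ⟨hσ, hL⟩ => ⟨hσ, mem_ite_inf_of_forall_apply_eq (hconst σ hσ hL) hL⟩,
      fun ⟨hσ, hL'⟩ => ⟨hσ, fun w => ite_inf_subset Vs w (hL' w)⟩⟩⟩

/-- Soundness of *type 2 forcing*.  `(M, L, l)` is a list coloring problem, `H` is the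
induced subgraph of `M` on the vertex set `S`, the chromatic number of `H` is `t`, the
union of the lists of vertices of `H` has at most `t` elements, and `Vs ⊆ S` is a set
which is a color class in every proper coloring of `H` using exactly `t` colors.
Then every solution `σ` of `(M, L, l)` is constant on `Vs` with common value in
`⋂_{w ∈ Vs} L w`, and replacing the lists on `Vs` by this intersection does not change
the solution set. -/
theorem stmt2 {V : Type*} [Fintype V] [DecidableEq V]
    (M : SimpleGraph V) (l t : ℕ) (L : V → Finset (Fin l))
    (S : Finset V)
    (hchi : (M.induce (↑S : Set V)).chromaticNumber = (t : ℕ∞))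
    (hA : (S.biUnion L).card ≤ t)
    (Vs : Finset V) (hVs : Vs ⊆ S)
    (hclass : ∀ c : V → Fin t,
      (∀ a ∈ S, ∀ b ∈ S, M.Adj a b → c a ≠ c b) →
      (∀ j : Fin t, ∃ w ∈ S, c w = j) →
      ∃ j : Fin t, ∀ w ∈ S, (w ∈ Vs ↔ c w = j)) :
    (∀ σ : V → Fin l,
        (∀ a b, M.Adj a b → σ a ≠ σ b) → (∀ w, σ w ∈ L w) →
        (∀ w ∈ Vs, ∀ w' ∈ Vs, σ w = σ w') ∧ (∀ w ∈ Vs, σ w ∈ Vs.inf L)) ∧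
    (∀ σ : V → Fin l,
        ((∀ a b, M.Adj a b → σ a ≠ σ b) ∧ ∀ w, σ w ∈ L w) ↔
        ((∀ a b, M.Adj a b → σ a ≠ σ b) ∧
          ∀ w, σ w ∈ (if w ∈ Vs then Vs.inf L else L w))) :=
  stmt2_general M l t L S hchi hA Vs hVs hclass
end

section
/- Let H be a t-chromatic finite simple graph such that in every proper t-coloring of H the set V* = {v_1, …, v_m} (m ≥ 1) is a color class, and let G = H − V* be the induced subgraph on V(H) ∖ V*. Then the chromatic number of G equals t−1, and the list F = {(i, W_i) : 1 ≤ i ≤ m}, where W_i = N_H(v_i) is the neighborhood of v_i in H, satisfies: (i) for every proper (t−1)-coloring of G, every W_i has nonempty intersection with all color classes, and (ii) for every surjective proper t-coloring of G, some W_i has nonempty intersection with all color classes; that is, F is a transverse system for G. -/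
/-!
In every proper `t`-coloring of `H` the set `V*` is a color class, so `V*` is independent and
the rest of `H` avoids one color: `G` is `(t-1)`-colorable. Conversely a coloring of `G`
extends to `H` by one new color on `V*`, so `χ(G) = t - 1`. For the transverse system, if a
neighborhood misses a color, recolor `V*` accordingly: in (i) `vᵢ` takes the missed color and
the rest of `V*` a fresh one, in (ii) each `vᵢ` takes a color missing from its neighborhood.
This gives a proper `t`-coloring of `H` in which a vertex of `V*` shares its color with a
vertex outside `V*`, so `V*` is not a color class.
-/

namespace SimpleGraph

variable {V α : Type*} {H : SimpleGraph V} {S : Set V}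

def IsForcedColorClass (H : SimpleGraph V) (α : Type*) (S : Set V) : Prop :=
  ∀ c : V → α, (∀ a b, H.Adj a b → c a ≠ c b) → ∃ j : α, ∀ w, w ∈ S ↔ c w = j

lemma IsForcedColorClass.isIndepSet (hS : H.IsForcedColorClass α S) (C : H.Coloring α) :
    H.IsIndepSet S := by
  obtain ⟨j, hj⟩ := hS C fun _ _ hab => C.valid hab
  intro a ha b hb _ hab
  exact C.valid hab (((hj a).1 ha).trans ((hj b).1 hb).symm)

lemma IsForcedColorClass.colorable_induce_compl {n : ℕ}
    (hS : H.IsForcedColorClass (Fin (n + 1)) S) (hH : H.Colorable (n + 1)) :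
    (H.induce Sᶜ).Colorable n := by
  obtain ⟨C⟩ := hH
  obtain ⟨j, hj⟩ := hS C fun _ _ hab => C.valid hab
  let D : (H.induce Sᶜ).Coloring {i : Fin (n + 1) // i ≠ j} :=
    Coloring.mk (fun w => ⟨C w, fun h => w.2 ((hj w).2 h)⟩)
      fun hab h => C.valid hab (congrArg Subtype.val h)
  simpa using D.colorable

lemma IsIndepSet.colorable_succ_of_colorable_induce_compl [DecidablePred (· ∈ S)] {n : ℕ}
    (hS : H.IsIndepSet S) (hG : (H.induce Sᶜ).Colorable n) : H.Colorable (n + 1) := by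
  obtain ⟨D⟩ := hG
  refine ⟨Coloring.mk (fun w => if h : w ∈ S then Fin.last n else (D ⟨w, h⟩).castSucc) ?_⟩
  intro a b hab
  by_cases ha : a ∈ S <;> by_cases hb : b ∈ S <;> simp only [ha, hb, dite_true, dite_false]
  · exact absurd hab (hS ha hb hab.ne)
  · exact (Fin.castSucc_ne_last _).symm
  · exact Fin.castSucc_ne_last _
  · exact fun h => D.valid (v := ⟨a, ha⟩) (w := ⟨b, hb⟩) hab (Fin.castSucc_injective _ h)

lemma IsForcedColorClass.chromaticNumber_induce_compl {n : ℕ}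
    (hS : H.IsForcedColorClass (Fin (n + 1)) S) (hχ : H.chromaticNumber = (n + 1 : ℕ)) :
    (H.induce Sᶜ).chromaticNumber = n := by
  classical
  have hH : H.Colorable (n + 1) := chromaticNumber_le_iff_colorable.mp hχ.le
  refine le_antisymm (hS.colorable_induce_compl hH).chromaticNumber_le ?_
  refine le_chromaticNumber_iff_colorable.mpr fun m hm => ?_
  have := le_chromaticNumber_iff_colorable.mp hχ.ge (m + 1)
    ((hS.isIndepSet hH.some).colorable_succ_of_colorable_induce_compl hm)
  exact_mod_cast Nat.le_of_succ_le_succ (by exact_mod_cast this)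

lemma IsIndepSet.piecewise_adj_ne [DecidablePred (· ∈ S)] (hS : H.IsIndepSet S)
    {τ σ : V → α} (hσ : ∀ a b, a ∉ S → b ∉ S → H.Adj a b → σ a ≠ σ b)
    (hτσ : ∀ v ∈ S, ∀ w ∉ S, H.Adj v w → τ v ≠ σ w) :
    ∀ a b, H.Adj a b → S.piecewise τ σ a ≠ S.piecewise τ σ b := by
  intro a b hab
  by_cases ha : a ∈ S <;> by_cases hb : b ∈ S <;>
    simp only [Set.piecewise_eq_of_mem, Set.piecewise_eq_of_notMem, ha, hb, not_false_eq_true]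
  · exact absurd hab (hS ha hb hab.ne)
  · exact hτσ a ha b hb hab
  · exact (hτσ b hb a ha hab.symm).symm
  · exact hσ a b ha hb hab

lemma IsForcedColorClass.exists_adj_eq_of_recolor (hS : H.IsForcedColorClass α S)
    (hind : H.IsIndepSet S) {σ : V → α}
    (hσ : ∀ a b, a ∉ S → b ∉ S → H.Adj a b → σ a ≠ σ b)
    (τ : V → α) {v w : V} (hv : v ∈ S) (hw : w ∉ S) (hvw : τ v = σ w) :
    ∃ u ∈ S, ∃ x ∉ S, H.Adj u x ∧ τ u = σ x := by
  classical
  by_contra! hτσ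
  obtain ⟨j, hj⟩ := hS _ (hind.piecewise_adj_ne hσ hτσ)
  refine hw ((hj w).2 ?_)
  rw [Set.piecewise_eq_of_notMem _ _ _ hw, ← hvw, ← Set.piecewise_eq_of_mem S τ σ hv]
  exact (hj v).1 hv

lemma IsForcedColorClass.exists_adj_eq_of_fewer_colors {n : ℕ}
    (hS : H.IsForcedColorClass (Fin (n + 1)) S) (hind : H.IsIndepSet S) {σ : V → Fin n}
    (hσ : ∀ a b, a ∉ S → b ∉ S → H.Adj a b → σ a ≠ σ b) {v w : V} (hv : v ∈ S)
    (hw : w ∉ S) :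
    ∃ x, x ∉ S ∧ H.Adj v x ∧ σ x = σ w := by
  classical
  have hσ' : ∀ a b, a ∉ S → b ∉ S → H.Adj a b → (σ a).castSucc ≠ (σ b).castSucc :=
    fun a b ha hb hab h => hσ a b ha hb hab (Fin.castSucc_injective _ h)
  obtain ⟨u, -, x, hx, hux, hτ⟩ := hS.exists_adj_eq_of_recolor hind hσ'
    (Function.update (fun _ => Fin.last n) v (σ w).castSucc) hv hw (Function.update_self ..)
  by_cases huv : u = v
  · subst huv
    rw [Function.update_self] at hτ
    exact ⟨x, hx, hux, (Fin.castSucc_injective _ hτ).symm⟩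
  · rw [Function.update_of_ne huv] at hτ
    exact absurd hτ.symm (Fin.castSucc_ne_last _)

lemma IsForcedColorClass.exists_forall_exists_adj_eq (hS : H.IsForcedColorClass α S)
    (hind : H.IsIndepSet S) (hne : S.Nonempty) {σ : V → α}
    (hσ : ∀ a b, a ∉ S → b ∉ S → H.Adj a b → σ a ≠ σ b)
    (hsurj : ∀ j : α, ∃ w, w ∉ S ∧ σ w = j) :
    ∃ v ∈ S, ∀ j : α, ∃ w, w ∉ S ∧ H.Adj v w ∧ σ w = j := by
  by_contra! hmiss
  obtain ⟨v, hv⟩ := hne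
  have : Nonempty α := ⟨σ v⟩
  choose! τ hτ using hmiss
  obtain ⟨w, hw, hwτ⟩ := hsurj (τ v)
  obtain ⟨u, hu, x, hx, hux, hτx⟩ := hS.exists_adj_eq_of_recolor hind hσ τ hv hw hwτ.symm
  exact hτ u hu x hx hux hτx.symm

end SimpleGraph

open SimpleGraph in
theorem stmt3_general {V : Type*} (H : SimpleGraph V) (t : ℕ) (ht : 1 ≤ t)
    (Vs : Finset V) (hne : Vs.Nonempty)
    (hchi : H.chromaticNumber = (t : ℕ∞))
    (hclass : ∀ c : V → Fin t, (∀ a b, H.Adj a b → c a ≠ c b) →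
      ∃ j : Fin t, ∀ w, w ∈ Vs ↔ c w = j) :
    (H.induce {w : V | w ∉ Vs}).chromaticNumber = ((t - 1 : ℕ) : ℕ∞) ∧
    (∀ σ : V → Fin (t - 1),
      (∀ a b, a ∉ Vs → b ∉ Vs → H.Adj a b → σ a ≠ σ b) →
      ∀ vi ∈ Vs, ∀ j : Fin (t - 1),
        (∃ w, w ∉ Vs ∧ σ w = j) → ∃ w, w ∉ Vs ∧ H.Adj vi w ∧ σ w = j) ∧
    (∀ σ : V → Fin t,
      (∀ a b, a ∉ Vs → b ∉ Vs → H.Adj a b → σ a ≠ σ b) →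
      (∀ j : Fin t, ∃ w, w ∉ Vs ∧ σ w = j) →
      ∃ vi ∈ Vs, ∀ j : Fin t, ∃ w, w ∉ Vs ∧ H.Adj vi w ∧ σ w = j) := by
  obtain ⟨n, rfl⟩ := Nat.exists_eq_add_of_le' ht
  rw [Nat.add_sub_cancel]
  have hS : H.IsForcedColorClass (Fin (n + 1)) Vs := hclass
  have hind : H.IsIndepSet Vs :=
    hS.isIndepSet (chromaticNumber_le_iff_colorable.mp hchi.le).some
  refine ⟨hS.chromaticNumber_induce_compl hchi, ?_, fun σ hσ hsurj =>
    hS.exists_forall_exists_adj_eq hind (Finset.coe_nonempty.mpr hne) hσ hsurj⟩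
  rintro σ hσ vi hvi j ⟨w, hw, rfl⟩
  exact hS.exists_adj_eq_of_fewer_colors hind hσ hvi hw

/-- Theorem A (part a) of the paper.  If `H` is a `t`-chromatic graph in which the
nonempty set `Vs = {v₁, …, v_m}` is a color class of every proper `t`-coloring, and
`G = H − Vs`, then `χ(G) = t − 1` and the family `F = {(i, N_H(vᵢ)) : vᵢ ∈ Vs}` is a
transverse system for `G`:
(i) in every proper `(t−1)`-coloring of `G` every `N_H(vᵢ)` meets every color class, and
(ii) in every surjective proper `t`-coloring of `G` some `N_H(vᵢ)` meets every color
class. -/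
theorem stmt3 {V : Type*} [Fintype V] (H : SimpleGraph V) (t : ℕ) (ht : 1 ≤ t)
    (Vs : Finset V) (hne : Vs.Nonempty)
    (hchi : H.chromaticNumber = (t : ℕ∞))
    (hclass : ∀ c : V → Fin t, (∀ a b, H.Adj a b → c a ≠ c b) →
      ∃ j : Fin t, ∀ w, w ∈ Vs ↔ c w = j) :
    (H.induce {w : V | w ∉ Vs}).chromaticNumber = ((t - 1 : ℕ) : ℕ∞) ∧
    (∀ σ : V → Fin (t - 1),
      (∀ a b, a ∉ Vs → b ∉ Vs → H.Adj a b → σ a ≠ σ b) →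
      ∀ vi ∈ Vs, ∀ j : Fin (t - 1),
        (∃ w, w ∉ Vs ∧ σ w = j) → ∃ w, w ∉ Vs ∧ H.Adj vi w ∧ σ w = j) ∧
    (∀ σ : V → Fin t,
      (∀ a b, a ∉ Vs → b ∉ Vs → H.Adj a b → σ a ≠ σ b) →
      (∀ j : Fin t, ∃ w, w ∉ Vs ∧ σ w = j) →
      ∃ vi ∈ Vs, ∀ j : Fin t, ∃ w, w ∉ Vs ∧ H.Adj vi w ∧ σ w = j) :=
  stmt3_general H t ht Vs hne hchi hclass
end

section
/- The graph G* is uniquely 3-colorable: it admits a proper 3-coloring, and every proper 3-coloring of G* induces the same partition of its vertex set into color classes, namely {v_1, v_4, v_7}, {v_2, v_5, v_8}, {v_3, v_6}. -/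
/-!
`G*` is built from the two diamonds `v₁v₂v₃v₄` and `v₅v₆v₇v₈`, and in a proper 3-coloring the
two tips of a diamond get the same color. So `v₄` repeats the color of `v₁`, and `v₈` that of
`v₅`; the edges `v₁v₅` and `v₃v₈` then force `v₅` to take the color of `v₂`, after which the
colors of `v₆` and `v₇` are forced as well. Hence every proper 3-coloring is
`v ↦ (a, b, c, a, b, c, a, b)` for distinct colors `a, b, c`.
-/

/-- The graph `G*` of Figure 1 of the paper: vertices `v₁, …, v₈` are modelled as
`0, …, 7 : Fin 8`, and the 13 edges are
`v₁v₂, v₁v₃, v₁v₅, v₂v₃, v₂v₄, v₃v₄, v₃v₈, v₄v₆, v₅v₆, v₅v₇, v₆v₇, v₆v₈, v₇v₈`. -/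
def Gstar : SimpleGraph (Fin 8) :=
  SimpleGraph.fromRel (fun a b =>
    ((a, b) : Fin 8 × Fin 8) ∈
      ([(0, 1), (0, 2), (0, 4), (1, 2), (1, 3), (2, 3), (2, 7), (3, 5), (4, 5), (4, 6),
        (5, 6), (5, 7), (6, 7)] : List (Fin 8 × Fin 8)))

theorem Fin.eq_of_ne_of_ne_three {x y z w : Fin 3} (hxy : x ≠ y) (hxz : x ≠ z) (hyz : y ≠ z)
    (hwy : w ≠ y) (hwz : w ≠ z) : w = x := by
  omega

def starColoring {α : Type*} (a b c : α) : Fin 8 → α := ![a, b, c, a, b, c, a, b]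

theorem starColoring_ne_of_adj {α : Type*} {a b c : α} (hab : a ≠ b) (hac : a ≠ c)
    (hbc : b ≠ c) {u v : Fin 8} (huv : Gstar.Adj u v) :
    starColoring a b c u ≠ starColoring a b c v := by
  fin_cases u <;> fin_cases v <;> simp_all [Gstar, starColoring, eq_comm]

theorem starColoring_colorClasses {α : Type*} {a b c : α} (hab : a ≠ b) (hac : a ≠ c)
    (hbc : b ≠ c) :
    {w | starColoring a b c w = starColoring a b c 0} = ({0, 3, 6} : Set (Fin 8)) ∧
    {w | starColoring a b c w = starColoring a b c 1} = ({1, 4, 7} : Set (Fin 8)) ∧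
    {w | starColoring a b c w = starColoring a b c 2} = ({2, 5} : Set (Fin 8)) := by
  refine ⟨?_, ?_, ?_⟩ <;> ext w <;> fin_cases w <;>
    simp [starColoring, hab, hac, hbc, hab.symm, hac.symm, hbc.symm]

theorem eq_starColoring_of_ne_of_adj {σ : Fin 8 → Fin 3}
    (hσ : ∀ u v, Gstar.Adj u v → σ u ≠ σ v) : σ = starColoring (σ 0) (σ 1) (σ 2) := by
  have e01 := hσ 0 1 (by simp [Gstar])
  have e02 := hσ 0 2 (by simp [Gstar])
  have e04 := hσ 0 4 (by simp [Gstar])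
  have e12 := hσ 1 2 (by simp [Gstar])
  have e13 := hσ 1 3 (by simp [Gstar])
  have e23 := hσ 2 3 (by simp [Gstar])
  have e27 := hσ 2 7 (by simp [Gstar])
  have e35 := hσ 3 5 (by simp [Gstar])
  have e45 := hσ 4 5 (by simp [Gstar])
  have e46 := hσ 4 6 (by simp [Gstar])
  have e56 := hσ 5 6 (by simp [Gstar])
  have e57 := hσ 5 7 (by simp [Gstar])
  have e67 := hσ 6 7 (by simp [Gstar])
  have h3 : σ 3 = σ 0 := Fin.eq_of_ne_of_ne_three e01 e02 e12 e13.symm e23.symm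
  have h7 : σ 7 = σ 4 := Fin.eq_of_ne_of_ne_three e45 e46 e56 e57.symm e67.symm
  have h4 : σ 4 = σ 1 := Fin.eq_of_ne_of_ne_three e01.symm e12 e02 e04.symm (h7 ▸ e27.symm)
  have h5 : σ 5 = σ 2 :=
    Fin.eq_of_ne_of_ne_three e02.symm e12.symm e01 (h3 ▸ e35.symm) (h4 ▸ e45.symm)
  have h6 : σ 6 = σ 0 :=
    Fin.eq_of_ne_of_ne_three e02 e01 e12.symm (h5 ▸ e56.symm) (h4 ▸ e46.symm)
  funext w
  fin_cases w <;> simp [starColoring, h3, h4, h5, h6, h7]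

/-- `G*` is uniquely 3-colorable: it has a proper 3-coloring, and every proper
3-coloring of `G*` has color classes `{v₁, v₄, v₇}`, `{v₂, v₅, v₈}`, `{v₃, v₆}`
(i.e. `{0, 3, 6}`, `{1, 4, 7}`, `{2, 5}` in our labelling). -/
theorem stmt6 :
    (∃ σ : Fin 8 → Fin 3, ∀ a b, Gstar.Adj a b → σ a ≠ σ b) ∧
    (∀ σ : Fin 8 → Fin 3, (∀ a b, Gstar.Adj a b → σ a ≠ σ b) →
      {w : Fin 8 | σ w = σ 0} = ({0, 3, 6} : Set (Fin 8)) ∧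
      {w : Fin 8 | σ w = σ 1} = ({1, 4, 7} : Set (Fin 8)) ∧
      {w : Fin 8 | σ w = σ 2} = ({2, 5} : Set (Fin 8))) := by
  refine ⟨⟨starColoring 0 1 2, fun _ _ ↦ starColoring_ne_of_adj (by decide) (by decide)
    (by decide)⟩, fun σ hσ ↦ ?_⟩
  rw [eq_starColoring_of_ne_of_adj hσ]
  exact starColoring_colorClasses (hσ 0 1 (by simp [Gstar])) (hσ 0 2 (by simp [Gstar]))
    (hσ 1 2 (by simp [Gstar]))
end

section
/- For every integer k ≥ 2, the coloring γ is a proper 3-coloring of the graph D_k. -/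
/-- Vertices of the graph `D_k`: `u`, `v`, `z`, the vertices `x_1, …, x_k`
(`x i` models `x_{i+1}`), and the vertices `v_{1,i}` (`a i`) and `v_{2,i}` (`b i`)
for `1 ≤ i ≤ k−1` (`a i`, `b i` model `v_{1,i+1}`, `v_{2,i+1}`). -/
inductive DVert (k : ℕ) : Type
  | u : DVert k
  | v : DVert k
  | z : DVert k
  | x : Fin k → DVert k
  | a : Fin (k - 1) → DVert k
  | b : Fin (k - 1) → DVert k

/-- The edges of `D_k`: `uz`, `ux_k`, `vx_k`, `zx_1`, `z v_{1,i}` for all `i`, and for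
each `1 ≤ i ≤ k−1` the two triangles `{x_i, v_{1,i}, v_{2,i}}`,
`{x_{i+1}, v_{1,i}, v_{2,i}}`. -/
def DRel (k : ℕ) : DVert k → DVert k → Prop
  | .u, .z => True
  | .u, .x i => (i : ℕ) = k - 1
  | .v, .x i => (i : ℕ) = k - 1
  | .z, .x i => (i : ℕ) = 0
  | .z, .a _ => True
  | .x j, .a i => (j : ℕ) = (i : ℕ) ∨ (j : ℕ) = (i : ℕ) + 1
  | .x j, .b i => (j : ℕ) = (i : ℕ) ∨ (j : ℕ) = (i : ℕ) + 1
  | .a i, .b j => (i : ℕ) = (j : ℕ)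
  | _, _ => False

/-- The graph `D_k`. -/
def Dgraph (k : ℕ) : SimpleGraph (DVert k) := SimpleGraph.fromRel (DRel k)

/-- The coloring `γ` of `D_k`: colors `1, 2, 3` are modelled as `0, 1, 2 : Fin 3`;
`γ(u) = 3`, `γ(v) = 1`, `γ(z) = 1`, `γ(xᵢ) = 2`, `γ(v_{1,i}) = 3`, `γ(v_{2,i}) = 1`. -/
def γD (k : ℕ) : DVert k → Fin 3
  | .u => 2
  | .v => 0
  | .z => 0
  | .x _ => 1
  | .a _ => 2
  | .b _ => 0

theorem γD_ne_of_DRel {k : ℕ} {p q : DVert k} (h : DRel k p q) : γD k p ≠ γD k q := by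
  cases p <;> cases q <;> simp_all [DRel, γD]

def γColoring (k : ℕ) : (Dgraph k).Coloring (Fin 3) :=
  SimpleGraph.Coloring.mk (γD k) fun {p q} h => by
    obtain ⟨-, h | h⟩ := (SimpleGraph.fromRel_adj _ p q).mp h
    · exact γD_ne_of_DRel h
    · exact (γD_ne_of_DRel h).symm

theorem stmt9_general (k : ℕ) :
    ∀ p q, (Dgraph k).Adj p q → γD k p ≠ γD k q :=
  fun _ _ h => (γColoring k).valid h

/-- For every `k ≥ 2`, `γ` is a proper 3-coloring of `D_k`. -/
theorem stmt9 (k : ℕ) (hk : 2 ≤ k) :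
    ∀ p q, (Dgraph k).Adj p q → γD k p ≠ γD k q :=
  stmt9_general k
end

section
/- For every integer k ≥ 2 and any two distinct colors a, b ∈ {1,2,3}, there is exactly one proper 3-coloring σ of the graph D_k with σ(u) = a and σ(v) = b; in particular, γ is the unique proper 3-coloring of D_k with σ(u) = 3 and σ(v) = 1. -/
/-! The two triangles on the edge `v_{1,i} v_{2,i}` force `x_i` and `x_{i+1}` to get the same
color, so all `x_i` share one color, which the neighbours `u, v` of `x_k` pin down as the third
color. Then `z` (adjacent to `u` and `x_1`), every `v_{1,i}` (adjacent to `z` and `x_i`) and every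
`v_{2,i}` (adjacent to `v_{1,i}` and `x_i`) are forced in turn. -/

/-- The sum of the three elements of `Fin 3` is `0`, so for `a ≠ b` this is the color
different from both. -/
def thirdColor (a b : Fin 3) : Fin 3 := -(a + b)

lemma thirdColor_ne_left {a b : Fin 3} (h : a ≠ b) : thirdColor a b ≠ a := by
  revert a b; decide

lemma thirdColor_ne_right {a b : Fin 3} (h : a ≠ b) : thirdColor a b ≠ b := by
  revert a b; decide

lemma Fin.three_eq_of_ne_of_ne {p q r s : Fin 3} (hpq : p ≠ q) (hpr : p ≠ r) (hqr : q ≠ r)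
    (hsq : s ≠ q) (hsr : s ≠ r) : s = p := by
  simp only [ne_eq, Fin.ext_iff] at *
  omega

lemma DRel.ne {k : ℕ} {p q : DVert k} (h : DRel k p q) : p ≠ q := by
  rintro rfl; cases p <;> simp [DRel] at h

namespace Dgraph

lemma adj_of_rel {k : ℕ} {p q : DVert k} (h : DRel k p q) : (Dgraph k).Adj p q :=
  SimpleGraph.fromRel_adj _ _ _ |>.mpr ⟨DRel.ne h, Or.inl h⟩

def canonicalColoring (k : ℕ) (a b : Fin 3) : DVert k → Fin 3
  | .u => a
  | .v => b
  | .z => b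
  | .x _ => thirdColor a b
  | .a _ => a
  | .b _ => b

lemma canonicalColoring_proper (k : ℕ) {a b : Fin 3} (hab : a ≠ b) (p q : DVert k)
    (hpq : (Dgraph k).Adj p q) : canonicalColoring k a b p ≠ canonicalColoring k a b q := by
  have := thirdColor_ne_left hab
  have := thirdColor_ne_right hab
  obtain ⟨-, h | h⟩ := (SimpleGraph.fromRel_adj _ _ _).mp hpq <;>
    cases p <;> cases q <;> simp_all [DRel, canonicalColoring, eq_comm]

section ProperColoring

variable {k : ℕ} {σ : DVert k → Fin 3} (hσ : ∀ p q, (Dgraph k).Adj p q → σ p ≠ σ q)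
include hσ

lemma color_ne (p q : DVert k) (h : DRel k p q) : σ p ≠ σ q :=
  hσ p q (adj_of_rel h)

lemma color_x_succ (i : ℕ) (hi : i + 1 < k) : σ (.x ⟨i + 1, hi⟩) = σ (.x ⟨i, by omega⟩) :=
  have hi' : i < k - 1 := by omega
  Fin.three_eq_of_ne_of_ne
    (color_ne hσ (.x ⟨i, by omega⟩) (.a ⟨i, hi'⟩) (Or.inl rfl))
    (color_ne hσ (.x ⟨i, by omega⟩) (.b ⟨i, hi'⟩) (Or.inl rfl))
    (color_ne hσ (.a ⟨i, hi'⟩) (.b ⟨i, hi'⟩) rfl)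
    (color_ne hσ (.x ⟨i + 1, hi⟩) (.a ⟨i, hi'⟩) (Or.inr rfl))
    (color_ne hσ (.x ⟨i + 1, hi⟩) (.b ⟨i, hi'⟩) (Or.inr rfl))

lemma color_x_eq_color_x_zero (i : Fin k) : σ (.x i) = σ (.x ⟨0, i.pos⟩) := by
  obtain ⟨n, hn⟩ := i
  induction n with
  | zero => rfl
  | succ n ih => rw [color_x_succ hσ n hn, ih]

lemma color_x_eq (i j : Fin k) : σ (.x i) = σ (.x j) := by
  rw [color_x_eq_color_x_zero hσ i, color_x_eq_color_x_zero hσ j]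

lemma eq_canonicalColoring (hk : 0 < k) (huv : σ .u ≠ σ .v) :
    σ = canonicalColoring k (σ .u) (σ .v) := by
  have hx : ∀ i, σ (.x i) = thirdColor (σ .u) (σ .v) := fun i => by
    have hlast : k - 1 < k := by omega
    rw [color_x_eq hσ i ⟨k - 1, hlast⟩]
    exact Fin.three_eq_of_ne_of_ne (thirdColor_ne_left huv) (thirdColor_ne_right huv) huv
      (color_ne hσ .u (.x ⟨k - 1, hlast⟩) rfl).symm
      (color_ne hσ .v (.x ⟨k - 1, hlast⟩) rfl).symm
  have hz : σ .z = σ .v := by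
    refine Fin.three_eq_of_ne_of_ne huv.symm (thirdColor_ne_right huv).symm
      (thirdColor_ne_left huv).symm (color_ne hσ .u .z trivial).symm ?_
    rw [← hx ⟨0, hk⟩]
    exact color_ne hσ .z (.x _) rfl
  have ha : ∀ i, σ (.a i) = σ .u := fun i => by
    refine Fin.three_eq_of_ne_of_ne huv (thirdColor_ne_left huv).symm
      (thirdColor_ne_right huv).symm ?_ ?_
    · rw [← hz]; exact (color_ne hσ .z (.a i) trivial).symm
    · rw [← hx ⟨i, by omega⟩]; exact (color_ne hσ (.x _) (.a i) (Or.inl rfl)).symm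
  have hb : ∀ i, σ (.b i) = σ .v := fun i => by
    refine Fin.three_eq_of_ne_of_ne huv.symm (thirdColor_ne_right huv).symm
      (thirdColor_ne_left huv).symm ?_ ?_
    · rw [← ha i]; exact (color_ne hσ (.a i) (.b i) rfl).symm
    · rw [← hx ⟨i, by omega⟩]; exact (color_ne hσ (.x _) (.b i) (Or.inl rfl)).symm
  funext p
  cases p <;> simp only [canonicalColoring, hx, hz, ha, hb]

end ProperColoring

lemma γD_eq_canonicalColoring (k : ℕ) : γD k = canonicalColoring k 2 0 := by
  funext p; cases p <;> rfl

end Dgraph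

/-- For every `k ≥ 2` and any two distinct colors `a, b`, there is exactly one proper
3-coloring `σ` of `D_k` with `σ(u) = a` and `σ(v) = b`; in particular `γ` is the unique
proper 3-coloring with `σ(u) = 3` and `σ(v) = 1` (i.e. `2` and `0 : Fin 3`). -/
theorem stmt10 (k : ℕ) (hk : 2 ≤ k) :
    (∀ ca cb : Fin 3, ca ≠ cb →
      ∃! σ : DVert k → Fin 3,
        (∀ p q, (Dgraph k).Adj p q → σ p ≠ σ q) ∧ σ .u = ca ∧ σ .v = cb) ∧
    (∀ σ : DVert k → Fin 3, (∀ p q, (Dgraph k).Adj p q → σ p ≠ σ q) →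
      σ .u = 2 → σ .v = 0 → σ = γD k) := by
  have hk0 : 0 < k := by omega
  constructor
  · intro ca cb hab
    refine ⟨Dgraph.canonicalColoring k ca cb,
      ⟨Dgraph.canonicalColoring_proper k hab, rfl, rfl⟩, ?_⟩
    rintro σ ⟨hσ, rfl, rfl⟩
    exact Dgraph.eq_canonicalColoring hσ hk0 hab
  · intro σ hσ hu hv
    rw [Dgraph.eq_canonicalColoring hσ hk0 (by rw [hu, hv]; decide), hu, hv,
      Dgraph.γD_eq_canonicalColoring]
end
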